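/- Let M ≥ 1, p > 2, and suppose J(s) = Σ_i a_i s_i² − Σ_i b_i s_i^p + Σ_{i≠j} d_ij s_j^{α_ij} s_i^{β_ij} (with a_i, b_i > 0, 0 ≤ d_ij = d_ji, α_ij, β_ij > 1, α_ij + β_ij = p, α_ji = β_ij) has a critical point s⁰ in (0,∞)^M. Then for each ε > 0 there exists δ > 0 such that whenever Σ_i(|ã_i − a_i| + |b̃_i − b_i|) + Σ_{i≠j}|d̃_ij − d_ij| < δ with d̃_ij ≥ 0 symmetric, the perturbed function J̃(s) = Σ_i ã_i s_i² − Σ_i b̃_i s_i^p + Σ_{i≠j} d̃_ij s_j^{α_ij} s_i^{β_ij} has a unique critical point s̃⁰ in (0,∞)^M, which is its global maximum and satisfies |s̃⁰ − s⁰| < ε. -/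

import Mathlib

/-!
At a positive critical point `s⁰` the critical equations turn Young's inequality
`x^α y^β ≤ (α x^p + β y^p)/p` into the coercivity bound `J(t) ≤ Σᵢ (aᵢ tᵢ² − κᵢ tᵢ^p)` with
`κᵢ = 2 aᵢ (s⁰ᵢ)^(2-p)/p > 0`. Since `|J̃(t) − J(t)| ≤ δ (1 + Σᵢ tᵢ^p)`, the bound survives small
perturbations, so every `J̃` attains its maximum over `[0,∞)^M` inside one fixed box `[0,R]^M`.
A maximiser has no zero coordinate (near `tᵢ = 0` the term `aᵢ tᵢ²` beats `bᵢ tᵢ^p`), hence is a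
critical point. Positive critical points are unique: at an index maximising `tᵢ / sᵢ` the critical
equations force `(tᵢ/sᵢ)^(p-1) ≤ tᵢ/sᵢ`. So `s⁰` is the strict maximum of `J` on the box, and since
`J̃ → J` uniformly there, the maximiser of `J̃` is close to `s⁰`.
-/

open Finset Filter Topology Function

theorem rpow_mul_rpow_le_weighted {x y u v a b p : ℝ} (hx : 0 ≤ x) (hy : 0 ≤ y) (hu : 0 < u)
    (hv : 0 < v) (ha : 0 ≤ a) (hb : 0 ≤ b) (hp : 0 < p) (hab : a + b = p) :
    x ^ a * y ^ b ≤ u ^ a * v ^ b * (a * (x / u) ^ p + b * (y / v) ^ p) / p := by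
  have hyoung := Real.geom_mean_le_arith_mean2_weighted (div_nonneg ha hp.le) (div_nonneg hb hp.le)
    (Real.rpow_nonneg (div_nonneg hx hu.le) p) (Real.rpow_nonneg (div_nonneg hy hv.le) p)
    (by rw [← add_div, hab, div_self hp.ne'])
  rw [← Real.rpow_mul (div_nonneg hx hu.le), ← Real.rpow_mul (div_nonneg hy hv.le),
    mul_div_cancel₀ _ hp.ne', mul_div_cancel₀ _ hp.ne'] at hyoung
  have hua : 0 < u ^ a := Real.rpow_pos_of_pos hu a
  have hvb : 0 < v ^ b := Real.rpow_pos_of_pos hv b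
  calc x ^ a * y ^ b = u ^ a * v ^ b * ((x / u) ^ a * (y / v) ^ b) := by
        rw [Real.div_rpow hx hu.le, Real.div_rpow hy hv.le]; field_simp
    _ ≤ u ^ a * v ^ b * (a / p * (x / u) ^ p + b / p * (y / v) ^ p) := by gcongr
    _ = u ^ a * v ^ b * (a * (x / u) ^ p + b * (y / v) ^ p) / p := by ring

theorem rpow_mul_rpow_le_add {x y a b p : ℝ} (hx : 0 ≤ x) (hy : 0 ≤ y) (ha : 0 ≤ a) (hb : 0 ≤ b)
    (hab : a + b = p) : x ^ a * y ^ b ≤ x ^ p + y ^ p := by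
  have hm : 0 ≤ max x y := le_max_of_le_left hx
  calc x ^ a * y ^ b ≤ max x y ^ a * max x y ^ b := by
        gcongr
        exacts [le_max_left _ _, le_max_right _ _]
    _ = max x y ^ p := by rw [← Real.rpow_add_of_nonneg hm ha hb, hab]
    _ ≤ x ^ p + y ^ p := by
      rcases max_choice x y with h | h <;> rw [h]
      · linarith [Real.rpow_nonneg hy p]
      · linarith [Real.rpow_nonneg hx p]

theorem rpow_two_le_one_add_rpow {x p : ℝ} (hx : 0 ≤ x) (hp : 2 ≤ p) :
    x ^ (2 : ℝ) ≤ 1 + x ^ p := by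
  rcases le_total x 1 with h | h
  · linarith [Real.rpow_le_one hx h zero_le_two, Real.rpow_nonneg hx p]
  · linarith [Real.rpow_le_rpow_of_exponent_le h hp]

theorem rpow_mul_rpow_le_of_le_mul {x y u v γ a b : ℝ} (hγ : 0 < γ) (hx : 0 ≤ x) (hu : 0 ≤ u)
    (hv : 0 ≤ v) (ha : 0 ≤ a) (hxu : x ≤ γ * u) (hyv : y = γ * v) :
    x ^ a * y ^ b ≤ γ ^ (a + b) * (u ^ a * v ^ b) := by
  rw [hyv, Real.mul_rpow hγ.le hv, Real.rpow_add hγ]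
  calc x ^ a * (γ ^ b * v ^ b) ≤ (γ * u) ^ a * (γ ^ b * v ^ b) := by
        gcongr
    _ = γ ^ a * γ ^ b * (u ^ a * v ^ b) := by rw [Real.mul_rpow hγ.le hu]; ring

theorem abs_sum_le_sum_mul {κ : Type*} {s : Finset κ} {f g : κ → ℝ} {K : ℝ}
    (h : ∀ i ∈ s, |f i| ≤ g i * K) : |∑ i ∈ s, f i| ≤ (∑ i ∈ s, g i) * K :=
  (abs_sum_le_sum_abs _ _).trans ((sum_le_sum h).trans_eq (sum_mul _ _ _).symm)

theorem tendsto_mul_rpow_two_sub_mul_rpow_atBot {C κ p : ℝ} (hκ : 0 < κ) (hp : 2 < p) :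
    Tendsto (fun x : ℝ => C * x ^ (2 : ℝ) - κ * x ^ p) atTop atBot := by
  have h : Tendsto (fun x : ℝ => x ^ (2 : ℝ) * (C - κ * x ^ (p - 2))) atTop atBot :=
    (tendsto_rpow_atTop two_pos).atTop_mul_atBot₀ <| tendsto_atBot_add_const_left _ C <|
      tendsto_neg_atTop_atBot.comp <| (tendsto_rpow_atTop (by linarith)).const_mul_atTop hκ
  refine h.congr' ((eventually_gt_atTop 0).mono fun x hx => ?_)
  rw [mul_sub, mul_left_comm, ← Real.rpow_add hx, add_sub_cancel, mul_comm]

theorem exists_mul_rpow_two_sub_mul_rpow_le {C κ p : ℝ} (hκ : 0 < κ) (hp : 2 < p) :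
    ∃ H, ∀ x, 0 ≤ x → C * x ^ (2 : ℝ) - κ * x ^ p ≤ H := by
  obtain ⟨X, hX⟩ := eventually_atTop.1
    ((tendsto_mul_rpow_two_sub_mul_rpow_atBot (C := C) hκ hp).eventually (eventually_le_atBot 0))
  refine ⟨|C| * max X 0 ^ (2 : ℝ), fun x hx => ?_⟩
  have hpow := Real.rpow_nonneg hx p
  rcases le_total X x with h | h
  · linarith [hX x h, mul_nonneg (abs_nonneg C) (Real.rpow_nonneg (le_max_right X 0) (2 : ℝ))]
  · calc C * x ^ (2 : ℝ) - κ * x ^ p ≤ |C| * x ^ (2 : ℝ) := by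
          linarith [mul_le_mul_of_nonneg_right (le_abs_self C) (Real.rpow_nonneg hx (2 : ℝ)),
            mul_nonneg hκ.le hpow]
      _ ≤ |C| * max X 0 ^ (2 : ℝ) := by gcongr; exact h.trans (le_max_left _ _)

theorem exists_pos_mul_rpow_lt {A B p : ℝ} (hA : 0 < A) (hp : 2 < p) :
    ∃ η > 0, B * η ^ p < A * η ^ (2 : ℝ) := by
  have hlim : Tendsto (fun η : ℝ => B * η ^ (p - 2)) (𝓝[>] 0) (𝓝 0) := by
    have := ((Real.continuous_rpow_const (by linarith : 0 ≤ p - 2)).tendsto 0).const_mul B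
    rw [Real.zero_rpow (by linarith), mul_zero] at this
    exact this.mono_left nhdsWithin_le_nhds
  obtain ⟨η, hηA, hη⟩ := ((hlim.eventually (gt_mem_nhds hA)).and self_mem_nhdsWithin).exists
  refine ⟨η, hη, ?_⟩
  rw [show η ^ p = η ^ (p - 2) * η ^ (2 : ℝ) by rw [← Real.rpow_add hη, sub_add_cancel],
    ← mul_assoc]
  exact mul_lt_mul_of_pos_right hηA (by positivity)

theorem exists_forall_sum_lt {ι : Type*} [Fintype ι] {g : ℝ → ℝ} (hg : Tendsto g atTop atBot)
    {H : ℝ} (hH : ∀ x, 0 ≤ x → g x ≤ H) (L : ℝ) :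
    ∃ R > 0, ∀ t : ι → ℝ, 0 ≤ t → ∀ k, R ≤ t k → ∑ i, g (t i) < L := by
  classical
  set H' := max H 0
  obtain ⟨R, hR⟩ :=
    eventually_atTop.1 (hg.eventually (eventually_lt_atBot (L - Fintype.card ι * H')))
  refine ⟨max R 1, by positivity, fun t ht k hk => ?_⟩
  have hrest : ∑ i ∈ univ.erase k, g (t i) ≤ Fintype.card ι * H' :=
    calc ∑ i ∈ univ.erase k, g (t i) ≤ ∑ _i ∈ univ.erase k, H' :=
          sum_le_sum fun i _ => (hH _ (ht i)).trans (le_max_left _ _)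
      _ ≤ ∑ _i : ι, H' :=
          sum_le_sum_of_subset_of_nonneg (erase_subset _ _) fun _ _ _ => le_max_right _ _
      _ = Fintype.card ι * H' := by simp
  rw [← add_sum_erase _ _ (mem_univ k)]
  linarith [hR (t k) ((le_max_left _ _).trans hk)]

theorem exists_pos_forall_le {ι : Type*} [Finite ι] {f : ι → ℝ} (hf : ∀ i, 0 < f i) :
    ∃ c > 0, ∀ i, c ≤ f i := by
  obtain ⟨c, hc, hcf⟩ := (((eventually_all.2 fun i => eventually_le_nhds (hf i)).filter_mono
    nhdsWithin_le_nhds).and self_mem_nhdsWithin : ∀ᶠ c in 𝓝[>] (0 : ℝ), _ ∧ 0 < c).exists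
  exact ⟨c, hcf, hc⟩

theorem IsCompact.exists_pos_forall_dist_lt {X : Type*} [PseudoMetricSpace X] {K : Set X}
    (hK : IsCompact K) {f : X → ℝ} (hf : ContinuousOn f K) {x₀ : X} (hx₀ : x₀ ∈ K)
    (hmax : ∀ x ∈ K, x ≠ x₀ → f x < f x₀) {ε : ℝ} (hε : 0 < ε) :
    ∃ η > 0, ∀ g : X → ℝ, (∀ x ∈ K, |g x - f x| < η) →
      ∀ y ∈ K, g x₀ ≤ g y → dist y x₀ < ε := by
  set F := K ∩ {x | ε ≤ dist x x₀}
  rcases F.eq_empty_or_nonempty with hF | hF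
  · refine ⟨1, one_pos, fun g _ y hy _ => not_le.1 fun hyε => ?_⟩
    exact (Set.eq_empty_iff_forall_notMem.1 hF) y ⟨hy, hyε⟩
  have hFc : IsCompact F :=
    hK.inter_right (isClosed_le continuous_const (continuous_id.dist continuous_const))
  obtain ⟨z, ⟨hzK, hzε⟩, hz⟩ := hFc.exists_isMaxOn hF (hf.mono Set.inter_subset_left)
  have hzx₀ : z ≠ x₀ := by rintro rfl; simp at hzε; linarith
  have hgap := hmax z hzK hzx₀
  refine ⟨(f x₀ - f z) / 2, by linarith, fun g hg y hy hgy => not_le.1 fun hyε => ?_⟩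
  have hfy : f y ≤ f z := hz ⟨hy, hyε⟩
  have h₀ := (abs_lt.1 (hg x₀ hx₀)).1
  have h₁ := (abs_lt.1 (hg y hy)).2
  linarith

theorem exists_isMaxOn_Ici_of_lt {ι : Type*} {f : (ι → ℝ) → ℝ} (hf : Continuous f) {w : ι → ℝ}
    (hw : 0 ≤ w) {R : ℝ} (hfar : ∀ t, 0 ≤ t → ∀ k, R ≤ t k → f t < f w) :
    ∃ m, 0 ≤ m ∧ (∀ i, m i < R) ∧ IsMaxOn f (Set.Ici 0) m := by
  have hlt : ∀ t, 0 ≤ t → f w ≤ f t → ∀ i, t i < R :=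
    fun t ht hwt i => not_le.1 fun h => (hfar t ht i h).not_ge hwt
  have hwK : w ∈ Set.Icc 0 fun _ => R := ⟨hw, fun i => (hlt w hw le_rfl i).le⟩
  obtain ⟨m, hmK, hmax⟩ := isCompact_Icc.exists_isMaxOn ⟨w, hwK⟩ hf.continuousOn
  have hwm : f w ≤ f m := hmax hwK
  refine ⟨m, hmK.1, hlt m hmK.1 hwm, fun t (ht : 0 ≤ t) => ?_⟩
  by_cases h : ∀ i, t i ≤ R
  · exact hmax ⟨ht, h⟩
  · obtain ⟨k, hk⟩ := not_forall.1 h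
    exact (hfar t ht k (not_le.1 hk).le).le.trans hwm

section OffDiagonalSums

variable {ι : Type*} [Fintype ι] [DecidableEq ι]

theorem sum_offDiag_comm {M : Type*} [AddCommMonoid M] (f : ι → ι → M) :
    ∑ i, ∑ j ∈ univ.filter (· ≠ i), f i j = ∑ i, ∑ j ∈ univ.filter (· ≠ i), f j i :=
  sum_comm' fun _ _ => by simp [ne_comm]

theorem exists_sum_apply_update {M X : Type*} [AddCommMonoid M] (f : ι → X → M) (t : ι → X)
    (i : ι) :
    ∃ C, ∀ x, ∑ k, f k (update t i x k) = C + f i x := by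
  refine ⟨∑ k ∈ univ \ {i}, f k (t k), fun x => ?_⟩
  rw [sum_congr rfl fun k _ => apply_update f t i x k, sum_update_of_mem (mem_univ i), add_comm]

theorem exists_sum_offDiag_update {M X : Type*} [AddCommMonoid M] (G : ι → ι → X → X → M)
    (t : ι → X) (i : ι) :
    ∃ C, ∀ x, ∑ k, ∑ j ∈ univ.filter (· ≠ k), G k j (update t i x j) (update t i x k) =
      C + ∑ j ∈ univ.filter (· ≠ i), (G i j (t j) x + G j i x (t j)) := by
  refine ⟨∑ k ∈ univ.erase i, ∑ j ∈ (univ.erase k).erase i, G k j (t j) (t k), fun x => ?_⟩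
  simp only [filter_ne', sum_add_distrib]
  rw [← add_sum_erase _ _ (mem_univ i)]
  have hi : ∀ j ∈ univ.erase i, G i j (update t i x j) (update t i x i) = G i j (t j) x :=
    fun j hj => by rw [update_self, update_of_ne (ne_of_mem_erase hj)]
  have hk : ∀ k ∈ univ.erase i, ∑ j ∈ univ.erase k, G k j (update t i x j) (update t i x k) =
      G k i x (t k) + ∑ j ∈ (univ.erase k).erase i, G k j (t j) (t k) := fun k hk => by
    have hki := ne_of_mem_erase hk
    rw [← add_sum_erase _ _ (mem_erase.2 ⟨hki.symm, mem_univ i⟩), update_self, update_of_ne hki]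
    congr 1
    exact sum_congr rfl fun j hj => by rw [update_of_ne (ne_of_mem_erase hj)]
  rw [sum_congr rfl hi, sum_congr rfl hk, sum_add_distrib]
  abel

end OffDiagonalSums

namespace CoupledSystem

structure Coeffs (ι : Type*) where
  a : ι → ℝ
  b : ι → ℝ
  d : ι → ι → ℝ

structure AdmissibleExponents {ι : Type*} (p : ℝ) (α β : ι → ι → ℝ) : Prop where
  one_lt_left : ∀ i j, i ≠ j → 1 < α i j
  one_lt_right : ∀ i j, i ≠ j → 1 < β i j
  add_eq : ∀ i j, i ≠ j → α i j + β i j = p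
  swap : ∀ i j, i ≠ j → α j i = β i j

structure IsCoupling {ι : Type*} (d : ι → ι → ℝ) : Prop where
  nonneg : ∀ i j, i ≠ j → 0 ≤ d i j
  symm : ∀ i j, i ≠ j → d i j = d j i

variable {ι : Type*} [Fintype ι] [DecidableEq ι] (p : ℝ) (α β : ι → ι → ℝ)

noncomputable def energy (c : Coeffs ι) (t : ι → ℝ) : ℝ :=
  ∑ i, c.a i * t i ^ (2 : ℝ) - ∑ i, c.b i * t i ^ p
    + ∑ i, ∑ j ∈ univ.filter (· ≠ i), c.d i j * t j ^ α i j * t i ^ β i j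

/-- `∂J/∂tᵢ`, provided `d` is symmetric and `α j i = β i j` (see `hasDerivAt_slice`). -/
noncomputable def partialEnergy (c : Coeffs ι) (t : ι → ℝ) (i : ι) : ℝ :=
  2 * c.a i * t i - p * c.b i * t i ^ (p - 1)
    + 2 * ∑ j ∈ univ.filter (· ≠ i), c.d i j * β i j * t j ^ α i j * t i ^ (β i j - 1)

def IsCritical (c : Coeffs ι) (t : ι → ℝ) : Prop :=
  ∀ i, partialEnergy p α β c t i = 0

/-- `J` on the `i`-th coordinate line through `t`, up to an additive constant
(see `exists_energy_update_eq`). -/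
noncomputable def slice (c : Coeffs ι) (t : ι → ℝ) (i : ι) (x : ℝ) : ℝ :=
  c.a i * x ^ (2 : ℝ) - c.b i * x ^ p
    + 2 * ∑ j ∈ univ.filter (· ≠ i), c.d i j * t j ^ α i j * x ^ β i j

def coeffDist (c' c : Coeffs ι) : ℝ :=
  ∑ i, (|c'.a i - c.a i| + |c'.b i - c.b i|) + ∑ i, ∑ j ∈ univ.filter (· ≠ i), |c'.d i j - c.d i j|

variable {p α β}

theorem exists_energy_update_eq (hE : AdmissibleExponents p α β) {c : Coeffs ι}
    (hd : IsCoupling c.d) (t : ι → ℝ) (i : ι) :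
    ∃ C, ∀ x, energy p α β c (update t i x) = C + slice p α β c t i x := by
  obtain ⟨C₁, h₁⟩ := exists_sum_apply_update (fun k y => c.a k * y ^ (2 : ℝ)) t i
  obtain ⟨C₂, h₂⟩ := exists_sum_apply_update (fun k y => c.b k * y ^ p) t i
  obtain ⟨C₃, h₃⟩ := exists_sum_offDiag_update (fun k j y z => c.d k j * y ^ α k j * z ^ β k j) t i
  refine ⟨C₁ - C₂ + C₃, fun x => ?_⟩
  have hswap : ∀ j ∈ univ.filter (· ≠ i),
      c.d i j * t j ^ α i j * x ^ β i j + c.d j i * x ^ α j i * t j ^ β j i =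
        2 * (c.d i j * t j ^ α i j * x ^ β i j) := fun j hj => by
    have hji : j ≠ i := (mem_filter.1 hj).2
    rw [hd.symm j i hji, hE.swap i j hji.symm, ← hE.swap j i hji]
    ring
  simp only [energy, slice, h₁, h₂, h₃, sum_congr rfl hswap, ← mul_sum]
  ring

theorem hasDerivAt_slice (c : Coeffs ι) {t : ι → ℝ} {i : ι} (hti : 0 < t i) :
    HasDerivAt (slice p α β c t i) (partialEnergy p α β c t i) (t i) := by
  have hpow : ∀ q : ℝ, HasDerivAt (fun x : ℝ => x ^ q) (q * t i ^ (q - 1)) (t i) :=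
    fun q => Real.hasDerivAt_rpow_const (Or.inl hti.ne')
  have h := (((hpow 2).const_mul (c.a i)).sub ((hpow p).const_mul (c.b i))).add
    ((HasDerivAt.fun_sum (u := univ.filter (· ≠ i)) fun j _ =>
      (hpow (β i j)).const_mul (c.d i j * t j ^ α i j)).const_mul 2)
  refine h.congr_deriv ?_
  rw [partialEnergy, show (2 : ℝ) - 1 = 1 by norm_num, Real.rpow_one]
  congr 1
  · ring
  · exact congrArg _ (sum_congr rfl fun j _ => by ring)

theorem partialEnergy_eq_zero_of_isLocalMax (hE : AdmissibleExponents p α β) {c : Coeffs ι}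
    (hd : IsCoupling c.d) {t : ι → ℝ} {i : ι} (hti : 0 < t i)
    (hloc : IsLocalMax (fun x => energy p α β c (update t i x)) (t i)) :
    partialEnergy p α β c t i = 0 := by
  obtain ⟨C, hC⟩ := exists_energy_update_eq hE hd t i
  simp only [hC] at hloc
  exact hloc.hasDerivAt_eq_zero ((hasDerivAt_slice c hti).const_add C)

theorem slice_zero (hp : 0 < p) (hE : AdmissibleExponents p α β) (c : Coeffs ι) (t : ι → ℝ)
    (i : ι) : slice p α β c t i 0 = 0 := by
  have hβ : ∀ j ∈ univ.filter (· ≠ i), c.d i j * t j ^ α i j * (0 : ℝ) ^ β i j = 0 :=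
    fun j hj => by
      rw [Real.zero_rpow (by linarith [hE.one_lt_right i j (mem_filter.1 hj).2.symm]), mul_zero]
  simp [slice, sum_eq_zero hβ, Real.zero_rpow hp.ne']

theorem pos_of_isMaxOn (hp : 2 < p) (hE : AdmissibleExponents p α β) {c : Coeffs ι}
    (hd : IsCoupling c.d) {i : ι} (ha : 0 < c.a i) {m : ι → ℝ} (hm : 0 ≤ m)
    (hmax : IsMaxOn (energy p α β c) (Set.Ici 0) m) : 0 < m i := by
  by_contra! hmi
  obtain ⟨C, hC⟩ := exists_energy_update_eq hE hd m i
  have hm0 : energy p α β c m = C := by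
    rw [← add_zero C, ← slice_zero (by linarith) hE c m i, ← hC, ← le_antisymm hmi (hm i),
      update_eq_self]
  obtain ⟨η, hη, hηlt⟩ := exists_pos_mul_rpow_lt (B := c.b i) ha hp
  have hinteraction : 0 ≤ ∑ j ∈ univ.filter (· ≠ i), c.d i j * m j ^ α i j * η ^ β i j :=
    sum_nonneg fun j hj => mul_nonneg (mul_nonneg (hd.nonneg i j (mem_filter.1 hj).2.symm)
      (Real.rpow_nonneg (hm j) _)) (Real.rpow_nonneg hη.le _)
  have hle : energy p α β c (update m i η) ≤ energy p α β c m :=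
    hmax (show 0 ≤ update m i η from le_update_iff.2 ⟨hη.le, fun j _ => hm j⟩)
  rw [hC, hm0, slice] at hle
  linarith

theorem isCritical_of_isMaxOn (hp : 2 < p) (hE : AdmissibleExponents p α β) {c : Coeffs ι}
    (ha : ∀ i, 0 < c.a i) (hd : IsCoupling c.d) {m : ι → ℝ} (hm : 0 ≤ m)
    (hmax : IsMaxOn (energy p α β c) (Set.Ici 0) m) :
    (∀ i, 0 < m i) ∧ IsCritical p α β c m := by
  have hpos i := pos_of_isMaxOn hp hE hd (ha i) hm hmax
  refine ⟨hpos, fun i => partialEnergy_eq_zero_of_isLocalMax hE hd (hpos i) ?_⟩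
  filter_upwards [Ioi_mem_nhds (hpos i)] with x hx
  simpa using hmax (show 0 ≤ update m i x from le_update_iff.2 ⟨le_of_lt hx, fun j _ => hm j⟩)

theorem interaction_le_of_le_mul (hE : AdmissibleExponents p α β) {c : Coeffs ι}
    (hd : ∀ i j, i ≠ j → 0 ≤ c.d i j) {s t : ι → ℝ} (hs : 0 ≤ s) (ht : 0 ≤ t)
    {γ : ℝ} (hγ : 0 < γ) (hts : ∀ j, t j ≤ γ * s j) {i : ι} (hti : t i = γ * s i) :
    ∑ j ∈ univ.filter (· ≠ i), c.d i j * β i j * t j ^ α i j * t i ^ (β i j - 1) ≤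
      γ ^ (p - 1) *
        ∑ j ∈ univ.filter (· ≠ i), c.d i j * β i j * s j ^ α i j * s i ^ (β i j - 1) := by
  rw [mul_sum]
  refine sum_le_sum fun j hj => ?_
  have hij : i ≠ j := (mem_filter.1 hj).2.symm
  have hdβ : 0 ≤ c.d i j * β i j := mul_nonneg (hd i j hij) (by linarith [hE.one_lt_right i j hij])
  have hexp : α i j + (β i j - 1) = p - 1 := by linarith [hE.add_eq i j hij]
  have := rpow_mul_rpow_le_of_le_mul (a := α i j) (b := β i j - 1) hγ (ht j) (hs j) (hs i)
    (by linarith [hE.one_lt_left i j hij]) (hts j) hti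
  rw [hexp] at this
  calc c.d i j * β i j * t j ^ α i j * t i ^ (β i j - 1)
      = c.d i j * β i j * (t j ^ α i j * t i ^ (β i j - 1)) := by ring
    _ ≤ c.d i j * β i j * (γ ^ (p - 1) * (s j ^ α i j * s i ^ (β i j - 1))) := by gcongr
    _ = _ := by ring

theorem le_of_isCritical (hp : 2 < p) (hE : AdmissibleExponents p α β) {c : Coeffs ι}
    (ha : ∀ i, 0 < c.a i) (hd : ∀ i j, i ≠ j → 0 ≤ c.d i j) {s t : ι → ℝ}
    (hs : ∀ i, 0 < s i) (ht : ∀ i, 0 < t i) (hcs : IsCritical p α β c s)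
    (hct : IsCritical p α β c t) : t ≤ s := by
  intro j
  have : Nonempty ι := ⟨j⟩
  obtain ⟨i, hi⟩ := Finite.exists_max fun k => t k / s k
  set γ := t i / s i
  have hγ : 0 < γ := div_pos (ht i) (hs i)
  have hts : ∀ k, t k ≤ γ * s k := fun k => (div_le_iff₀ (hs k)).1 (hi k)
  have hti : t i = γ * s i := (div_mul_cancel₀ _ (hs i).ne').symm
  suffices hγ1 : γ ≤ 1 by nlinarith [hts j, hs j]
  have hS := interaction_le_of_le_mul hE hd (fun k => (hs k).le) (fun k => (ht k).le) hγ hts hti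
  have hpow : t i ^ (p - 1) = γ ^ (p - 1) * s i ^ (p - 1) := by
    rw [hti, Real.mul_rpow hγ.le (hs i).le]
  have hcs := hcs i
  have hct := hct i
  simp only [partialEnergy] at hcs hct
  set Ss := ∑ j ∈ univ.filter (· ≠ i), c.d i j * β i j * s j ^ α i j * s i ^ (β i j - 1)
  set St := ∑ j ∈ univ.filter (· ≠ i), c.d i j * β i j * t j ^ α i j * t i ^ (β i j - 1)
  have hkey : γ ^ (p - 1) * (c.a i * s i) ≤ γ ^ (1 : ℝ) * (c.a i * s i) := by
    rw [hpow, hti] at hct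
    have e : γ * (c.a i * s i) - γ ^ (p - 1) * (c.a i * s i) = γ ^ (p - 1) * Ss - St := by
      linear_combination (hct - γ ^ (p - 1) * hcs) / 2
    rw [Real.rpow_one]
    linarith
  by_contra! hγ1
  exact absurd hkey (not_le.2 (mul_lt_mul_of_pos_right
    (Real.rpow_lt_rpow_of_exponent_lt hγ1 (by linarith)) (mul_pos (ha i) (hs i))))

theorem eq_of_isCritical (hp : 2 < p) (hE : AdmissibleExponents p α β) {c : Coeffs ι}
    (ha : ∀ i, 0 < c.a i) (hd : ∀ i j, i ≠ j → 0 ≤ c.d i j) {s t : ι → ℝ}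
    (hs : ∀ i, 0 < s i) (ht : ∀ i, 0 < t i) (hcs : IsCritical p α β c s)
    (hct : IsCritical p α β c t) : t = s :=
  le_antisymm (le_of_isCritical hp hE ha hd hs ht hcs hct)
    (le_of_isCritical hp hE ha hd ht hs hct hcs)

theorem interaction_le (hp : 0 < p) (hE : AdmissibleExponents p α β) {c : Coeffs ι}
    (hd : IsCoupling c.d) {w t : ι → ℝ} (hw : ∀ i, 0 < w i) (ht : 0 ≤ t) :
    ∑ i, ∑ j ∈ univ.filter (· ≠ i), c.d i j * t j ^ α i j * t i ^ β i j ≤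
      ∑ i, 2 / p * (∑ j ∈ univ.filter (· ≠ i), c.d i j * β i j * w j ^ α i j * w i ^ β i j) *
        (t i / w i) ^ p := by
  set F : ι → ι → ℝ := fun i j => c.d i j * β i j * w j ^ α i j * w i ^ β i j * (t i / w i) ^ p / p
  have hterm : ∀ i, ∀ j ∈ univ.filter (· ≠ i),
      c.d i j * t j ^ α i j * t i ^ β i j ≤ F i j + F j i := fun i j hj => by
    have hij : i ≠ j := (mem_filter.1 hj).2.symm
    have hα := hE.one_lt_left i j hij
    have hβ := hE.one_lt_right i j hij
    have hyoung := rpow_mul_rpow_le_weighted (ht j) (ht i) (hw j) (hw i) (by linarith)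
      (by linarith) hp (hE.add_eq i j hij)
    simp only [F]
    rw [← hd.symm i j hij, hE.swap i j hij, ← hE.swap j i hij.symm]
    calc c.d i j * t j ^ α i j * t i ^ β i j = c.d i j * (t j ^ α i j * t i ^ β i j) := by ring
      _ ≤ c.d i j * (w j ^ α i j * w i ^ β i j *
            (α i j * (t j / w j) ^ p + β i j * (t i / w i) ^ p) / p) := by
        gcongr
        exact hd.nonneg i j hij
      _ = _ := by ring
  calc ∑ i, ∑ j ∈ univ.filter (· ≠ i), c.d i j * t j ^ α i j * t i ^ β i j
      ≤ ∑ i, ∑ j ∈ univ.filter (· ≠ i), (F i j + F j i) :=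
        sum_le_sum fun i _ => sum_le_sum (hterm i)
    _ = ∑ i, 2 * ∑ j ∈ univ.filter (· ≠ i), F i j := by
      simp only [sum_add_distrib, ← sum_offDiag_comm F, two_mul]
    _ = _ := by
      refine sum_congr rfl fun i _ => ?_
      simp only [F, ← sum_div, ← sum_mul]
      ring

theorem mul_partialEnergy (c : Coeffs ι) {t : ι → ℝ} {i : ι} (hti : 0 < t i) :
    t i * partialEnergy p α β c t i = 2 * c.a i * t i ^ (2 : ℝ) - p * c.b i * t i ^ p
      + 2 * ∑ j ∈ univ.filter (· ≠ i), c.d i j * β i j * t j ^ α i j * t i ^ β i j := by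
  have hpow : ∀ q : ℝ, t i * t i ^ (q - 1) = t i ^ q := fun q => by
    rw [Real.rpow_sub_one hti.ne', mul_div_cancel₀ _ hti.ne']
  have hsum : t i * ∑ j ∈ univ.filter (· ≠ i), c.d i j * β i j * t j ^ α i j * t i ^ (β i j - 1) =
      ∑ j ∈ univ.filter (· ≠ i), c.d i j * β i j * t j ^ α i j * t i ^ β i j := by
    rw [mul_sum]
    exact sum_congr rfl fun j _ => by rw [← hpow (β i j)]; ring
  rw [partialEnergy, ← hpow p, Real.rpow_two, ← hsum]
  ring

theorem energy_le_of_isCritical (hp : 2 < p) (hE : AdmissibleExponents p α β) {c : Coeffs ι}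
    (hd : IsCoupling c.d) {w t : ι → ℝ} (hw : ∀ i, 0 < w i) (hcrit : IsCritical p α β c w)
    (ht : 0 ≤ t) :
    energy p α β c t ≤
      ∑ i, (c.a i * t i ^ (2 : ℝ) - 2 * c.a i * w i ^ (2 : ℝ) / (p * w i ^ p) * t i ^ p) := by
  have hW : ∀ i, p * c.b i * w i ^ p = 2 * c.a i * w i ^ (2 : ℝ)
      + 2 * ∑ j ∈ univ.filter (· ≠ i), c.d i j * β i j * w j ^ α i j * w i ^ β i j := fun i => by
    linarith [mul_partialEnergy (p := p) (α := α) (β := β) c (hw i),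
      mul_eq_zero_of_right (w i) (hcrit i)]
  have hyoung := interaction_le (by linarith) hE hd hw ht
  calc energy p α β c t ≤ ∑ i, c.a i * t i ^ (2 : ℝ) - ∑ i, c.b i * t i ^ p + ∑ i, 2 / p *
      (∑ j ∈ univ.filter (· ≠ i), c.d i j * β i j * w j ^ α i j * w i ^ β i j) *
        (t i / w i) ^ p := by
        unfold energy
        linarith
    _ = _ := by
      rw [← sum_sub_distrib, ← sum_add_distrib]
      refine sum_congr rfl fun i _ => ?_
      have hwp : 0 < w i ^ p := Real.rpow_pos_of_pos (hw i) p
      rw [Real.div_rpow (ht i) (hw i).le]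
      field_simp
      linear_combination (-t i ^ p) * hW i

theorem exists_energy_le_sum (hp : 2 < p) (hE : AdmissibleExponents p α β) {c : Coeffs ι}
    (ha : ∀ i, 0 < c.a i) (hd : IsCoupling c.d) {w : ι → ℝ} (hw : ∀ i, 0 < w i)
    (hcrit : IsCritical p α β c w) :
    ∃ C, ∃ κ > 0, ∀ t, 0 ≤ t → energy p α β c t ≤ ∑ i, (C * t i ^ (2 : ℝ) - κ * t i ^ p) := by
  obtain ⟨κ, hκ, hκle⟩ :=
    exists_pos_forall_le (f := fun i => 2 * c.a i * w i ^ (2 : ℝ) / (p * w i ^ p))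
    fun i => div_pos (mul_pos (mul_pos two_pos (ha i)) (Real.rpow_pos_of_pos (hw i) _))
      (mul_pos (by linarith) (Real.rpow_pos_of_pos (hw i) p))
  refine ⟨∑ i, c.a i, κ, hκ, fun t ht => (energy_le_of_isCritical hp hE hd hw hcrit ht).trans
    (sum_le_sum fun i _ => ?_)⟩
  linarith [mul_le_mul_of_nonneg_right (single_le_sum (fun k _ => (ha k).le) (mem_univ i))
    (Real.rpow_nonneg (ht i) (2 : ℝ)),
    mul_le_mul_of_nonneg_right (hκle i) (Real.rpow_nonneg (ht i) p)]

theorem abs_energy_sub_le (hp : 2 ≤ p) (hE : AdmissibleExponents p α β) (c' c : Coeffs ι)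
    {t : ι → ℝ} (ht : 0 ≤ t) :
    |energy p α β c' t - energy p α β c t| ≤ coeffDist c' c * (1 + ∑ k, t k ^ p) := by
  set Φ := 1 + ∑ k, t k ^ p
  have hpow : ∀ i, 0 ≤ t i ^ p := fun i => Real.rpow_nonneg (ht i) p
  have hΦp : ∀ i, t i ^ p ≤ Φ := fun i => by
    linarith [single_le_sum (fun k _ => hpow k) (mem_univ i)]
  have hΦ2 : ∀ i, t i ^ (2 : ℝ) ≤ Φ := fun i => by
    linarith [rpow_two_le_one_add_rpow (ht i) hp, single_le_sum (fun k _ => hpow k) (mem_univ i)]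
  have hΦd : ∀ i, ∀ j ∈ univ.filter (· ≠ i), t j ^ α i j * t i ^ β i j ≤ Φ := fun i j hj => by
    have hij : i ≠ j := (mem_filter.1 hj).2.symm
    have hpair : t j ^ p + t i ^ p ≤ ∑ k, t k ^ p := by
      rw [← sum_pair (f := fun k => t k ^ p) hij.symm]
      exact sum_le_sum_of_subset_of_nonneg (subset_univ _) fun k _ _ => hpow k
    linarith [rpow_mul_rpow_le_add (ht j) (ht i) (by linarith [hE.one_lt_left i j hij])
      (by linarith [hE.one_lt_right i j hij]) (hE.add_eq i j hij)]
  have hdiff : energy p α β c' t - energy p α β c t = ∑ i, (c'.a i - c.a i) * t i ^ (2 : ℝ)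
      - ∑ i, (c'.b i - c.b i) * t i ^ p
      + ∑ i, ∑ j ∈ univ.filter (· ≠ i), (c'.d i j - c.d i j) * t j ^ α i j * t i ^ β i j := by
    simp only [energy, sub_mul, sum_sub_distrib]
    ring
  have ha : |∑ i, (c'.a i - c.a i) * t i ^ (2 : ℝ)| ≤ (∑ i, |c'.a i - c.a i|) * Φ :=
    abs_sum_le_sum_mul fun i _ => by
      rw [abs_mul, abs_of_nonneg (Real.rpow_nonneg (ht i) _)]
      exact mul_le_mul_of_nonneg_left (hΦ2 i) (abs_nonneg _)
  have hb : |∑ i, (c'.b i - c.b i) * t i ^ p| ≤ (∑ i, |c'.b i - c.b i|) * Φ :=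
    abs_sum_le_sum_mul fun i _ => by
      rw [abs_mul, abs_of_nonneg (hpow i)]
      exact mul_le_mul_of_nonneg_left (hΦp i) (abs_nonneg _)
  have hd : |∑ i, ∑ j ∈ univ.filter (· ≠ i), (c'.d i j - c.d i j) * t j ^ α i j * t i ^ β i j|
      ≤ (∑ i, ∑ j ∈ univ.filter (· ≠ i), |c'.d i j - c.d i j|) * Φ :=
    abs_sum_le_sum_mul fun i _ => abs_sum_le_sum_mul fun j hj => by
      rw [mul_assoc, abs_mul,
        abs_of_nonneg (mul_nonneg (Real.rpow_nonneg (ht j) _) (Real.rpow_nonneg (ht i) _))]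
      exact mul_le_mul_of_nonneg_left (hΦd i j hj) (abs_nonneg _)
  rw [hdiff, coeffDist, sum_add_distrib]
  linarith [abs_add_le (∑ i, (c'.a i - c.a i) * t i ^ (2 : ℝ) - ∑ i, (c'.b i - c.b i) * t i ^ p)
    (∑ i, ∑ j ∈ univ.filter (· ≠ i), (c'.d i j - c.d i j) * t j ^ α i j * t i ^ β i j),
    abs_sub (∑ i, (c'.a i - c.a i) * t i ^ (2 : ℝ)) (∑ i, (c'.b i - c.b i) * t i ^ p)]

theorem coeffDist_nonneg (c' c : Coeffs ι) : 0 ≤ coeffDist c' c := by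
  unfold coeffDist
  positivity

theorem abs_a_sub_le_coeffDist (c' c : Coeffs ι) (i : ι) : |c'.a i - c.a i| ≤ coeffDist c' c := by
  have hd : 0 ≤ ∑ i, ∑ j ∈ univ.filter (· ≠ i), |c'.d i j - c.d i j| :=
    sum_nonneg fun _ _ => sum_nonneg fun _ _ => abs_nonneg _
  have hi := single_le_sum (f := fun k => |c'.a k - c.a k| + |c'.b k - c.b k|)
    (fun _ _ => by positivity) (mem_univ i)
  rw [coeffDist]
  linarith [abs_nonneg (c'.b i - c.b i)]

theorem abs_energy_sub_le_of_mem_Icc (hp : 2 ≤ p) (hE : AdmissibleExponents p α β)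
    (c' c : Coeffs ι) {R : ℝ} {t : ι → ℝ} (ht : t ∈ Set.Icc 0 fun _ => R) :
    |energy p α β c' t - energy p α β c t| ≤ coeffDist c' c * (1 + Fintype.card ι * R ^ p) := by
  refine (abs_energy_sub_le hp hE c' c ht.1).trans (mul_le_mul_of_nonneg_left ?_ ?_)
  · have : ∑ k, t k ^ p ≤ ∑ _k : ι, R ^ p :=
      sum_le_sum fun k _ => Real.rpow_le_rpow (ht.1 k) (ht.2 k) (by linarith)
    simpa using this
  · exact coeffDist_nonneg c' c

theorem energy_le_one_add_sum (hp : 2 ≤ p) (hE : AdmissibleExponents p α β) {c c' : Coeffs ι}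
    {C κ : ℝ} (hbound : ∀ t, 0 ≤ t → energy p α β c t ≤ ∑ i, (C * t i ^ (2 : ℝ) - κ * t i ^ p))
    (hc' : coeffDist c' c ≤ min 1 (κ / 2)) {t : ι → ℝ} (ht : 0 ≤ t) :
    energy p α β c' t ≤ 1 + ∑ i, (C * t i ^ (2 : ℝ) - κ / 2 * t i ^ p) := by
  have hpow : 0 ≤ ∑ k, t k ^ p := sum_nonneg fun k _ => Real.rpow_nonneg (ht k) p
  have hpert := (abs_le.1 (abs_energy_sub_le hp hE c' c ht)).2
  have hΦ : coeffDist c' c * (1 + ∑ k, t k ^ p) ≤ 1 + κ / 2 * ∑ k, t k ^ p := by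
    nlinarith [min_le_left 1 (κ / 2), min_le_right 1 (κ / 2)]
  have hsplit : ∑ i, (C * t i ^ (2 : ℝ) - κ / 2 * t i ^ p) =
      ∑ i, (C * t i ^ (2 : ℝ) - κ * t i ^ p) + κ / 2 * ∑ k, t k ^ p := by
    rw [mul_sum, ← sum_add_distrib]
    exact sum_congr rfl fun i _ => by ring
  linarith [hbound t ht]

theorem exists_uniform_far_field (hp : 2 < p) (hE : AdmissibleExponents p α β) {c : Coeffs ι}
    (ha : ∀ i, 0 < c.a i) (hd : IsCoupling c.d) {w : ι → ℝ} (hw : ∀ i, 0 < w i)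
    (hcrit : IsCritical p α β c w) :
    ∃ δ > 0, ∃ R > 0, ∀ c' : Coeffs ι, coeffDist c' c ≤ δ → (∀ i, 0 < c'.a i) ∧
      ∀ t, 0 ≤ t → ∀ k, R ≤ t k → energy p α β c' t < energy p α β c' w := by
  obtain ⟨C, κ, hκ, hbound⟩ := exists_energy_le_sum hp hE ha hd hw hcrit
  obtain ⟨a₀, ha₀, ha₀le⟩ := exists_pos_forall_le ha
  obtain ⟨H, hH⟩ := exists_mul_rpow_two_sub_mul_rpow_le (C := C) (half_pos hκ) hp
  obtain ⟨R, hR, hRfar⟩ := exists_forall_sum_lt (ι := ι)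
    (tendsto_mul_rpow_two_sub_mul_rpow_atBot (C := C) (half_pos hκ) hp) hH
    (energy p α β c w - (1 + ∑ k, w k ^ p) - 1)
  refine ⟨min (min 1 (κ / 2)) (a₀ / 2), lt_min (lt_min one_pos (half_pos hκ)) (half_pos ha₀),
    R, hR, fun c' hc' => ⟨fun i => ?_, fun t ht k hk => ?_⟩⟩
  · linarith [(abs_le.1 ((abs_a_sub_le_coeffDist c' c i).trans hc')).1,
      min_le_right (min 1 (κ / 2)) (a₀ / 2), ha₀le i]
  · have hc'1 : coeffDist c' c ≤ min 1 (κ / 2) := hc'.trans (min_le_left _ _)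
    have hw' := (abs_le.1 (abs_energy_sub_le hp.le hE c' c fun i => (hw i).le)).1
    have : coeffDist c' c * (1 + ∑ k, w k ^ p) ≤ 1 + ∑ k, w k ^ p :=
      mul_le_of_le_one_left
        (add_nonneg zero_le_one (sum_nonneg fun k _ => Real.rpow_nonneg (hw k).le p))
        (hc'1.trans (min_le_left _ _))
    linarith [energy_le_one_add_sum hp.le hE hbound hc'1 ht, hRfar t ht k hk]

theorem continuous_energy (hp : 0 ≤ p) (hE : AdmissibleExponents p α β) (c : Coeffs ι) :
    Continuous (energy p α β c) := by
  have hpow : ∀ {q : ℝ}, 0 ≤ q → ∀ i, Continuous fun t : ι → ℝ => t i ^ q :=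
    fun hq i => (Real.continuous_rpow_const hq).comp (continuous_apply i)
  refine ((continuous_finsetSum _ fun i _ => (hpow zero_le_two i).const_mul _).sub
    (continuous_finsetSum _ fun i _ => (hpow hp i).const_mul _)).add
    (continuous_finsetSum _ fun i _ => continuous_finsetSum _ fun j hj => ?_)
  have hij : i ≠ j := (mem_filter.1 hj).2.symm
  exact ((hpow (by linarith [hE.one_lt_left i j hij]) j).const_mul _).mul
    (hpow (by linarith [hE.one_lt_right i j hij]) i)

theorem exists_isCritical_isMaxOn (hp : 2 < p) (hE : AdmissibleExponents p α β) {c : Coeffs ι}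
    (ha : ∀ i, 0 < c.a i) (hd : IsCoupling c.d) {w : ι → ℝ} (hw : 0 ≤ w) {R : ℝ}
    (hfar : ∀ t, 0 ≤ t → ∀ k, R ≤ t k → energy p α β c t < energy p α β c w) :
    ∃ m, (∀ i, 0 < m i) ∧ (∀ i, m i < R) ∧ IsCritical p α β c m ∧
      IsMaxOn (energy p α β c) (Set.Ici 0) m := by
  obtain ⟨m, hm, hmR, hmax⟩ :=
    exists_isMaxOn_Ici_of_lt (continuous_energy (by linarith) hE c) hw hfar
  obtain ⟨hpos, hcrit⟩ := isCritical_of_isMaxOn hp hE ha hd hm hmax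
  exact ⟨m, hpos, hmR, hcrit, hmax⟩

theorem energy_lt_of_isMaxOn (hp : 2 < p) (hE : AdmissibleExponents p α β) {c : Coeffs ι}
    (ha : ∀ i, 0 < c.a i) (hd : IsCoupling c.d) {w : ι → ℝ} (hw : ∀ i, 0 < w i)
    (hcrit : IsCritical p α β c w) (hmax : IsMaxOn (energy p α β c) (Set.Ici 0) w) {t : ι → ℝ}
    (ht : 0 ≤ t) (htw : t ≠ w) : energy p α β c t < energy p α β c w := by
  refine lt_of_not_ge fun hwt => htw ?_
  have htmax : IsMaxOn (energy p α β c) (Set.Ici 0) t :=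
    isMaxOn_iff.2 fun x hx => (isMaxOn_iff.1 hmax x hx).trans hwt
  obtain ⟨htpos, htcrit⟩ := isCritical_of_isMaxOn hp hE ha hd ht htmax
  exact eq_of_isCritical hp hE ha hd.nonneg hw htpos hcrit htcrit

end CoupledSystem

open CoupledSystem

theorem stability_lemma_general
    {M : ℕ} (p : ℝ) (hp : 2 < p)
    (a b : Fin M → ℝ) (d α β : Fin M → Fin M → ℝ)
    (ha : ∀ i, 0 < a i)
    (hd : ∀ i j, i ≠ j → 0 ≤ d i j)
    (hdsymm : ∀ i j, i ≠ j → d i j = d j i)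
    (hα : ∀ i j, i ≠ j → 1 < α i j) (hβ : ∀ i j, i ≠ j → 1 < β i j)
    (hαβp : ∀ i j, i ≠ j → α i j + β i j = p)
    (hsymm : ∀ i j, i ≠ j → α j i = β i j)
    (s₀ : Fin M → ℝ) (hs₀ : ∀ i, 0 < s₀ i)
    -- `s⁰` is a critical point of `J` in `(0,∞)^M`
    (hcrit : ∀ i,
      2 * a i * s₀ i - p * b i * s₀ i ^ (p - 1)
        + 2 * ∑ j ∈ Finset.univ.filter (· ≠ i),
            d i j * β i j * s₀ j ^ α i j * s₀ i ^ (β i j - 1) = 0) :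
    ∀ ε > (0 : ℝ), ∃ δ > (0 : ℝ),
      ∀ (a' b' : Fin M → ℝ) (d' : Fin M → Fin M → ℝ),
        (∀ i j, i ≠ j → 0 ≤ d' i j) →
        (∀ i j, i ≠ j → d' i j = d' j i) →
        (∑ i, (|a' i - a i| + |b' i - b i|))
          + ∑ i, ∑ j ∈ Finset.univ.filter (· ≠ i), |d' i j - d i j| < δ →
        ∃ s' : Fin M → ℝ, (∀ i, 0 < s' i) ∧
          -- `s'` is a critical point of the perturbed function `J̃`
          (∀ i, 2 * a' i * s' i - p * b' i * s' i ^ (p - 1)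
            + 2 * ∑ j ∈ Finset.univ.filter (· ≠ i),
                d' i j * β i j * s' j ^ α i j * s' i ^ (β i j - 1) = 0) ∧
          -- uniqueness among critical points of `J̃` in `(0,∞)^M`
          (∀ t : Fin M → ℝ, (∀ i, 0 < t i) →
            (∀ i, 2 * a' i * t i - p * b' i * t i ^ (p - 1)
              + 2 * ∑ j ∈ Finset.univ.filter (· ≠ i),
                  d' i j * β i j * t j ^ α i j * t i ^ (β i j - 1) = 0) →
            t = s') ∧
          -- `s'` is a global maximum of `J̃` on `(0,∞)^M`
          (∀ t : Fin M → ℝ, (∀ i, 0 < t i) →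
            (∑ i, a' i * t i ^ (2 : ℝ) - ∑ i, b' i * t i ^ p
              + ∑ i, ∑ j ∈ Finset.univ.filter (· ≠ i),
                  d' i j * t j ^ α i j * t i ^ β i j) ≤
            (∑ i, a' i * s' i ^ (2 : ℝ) - ∑ i, b' i * s' i ^ p
              + ∑ i, ∑ j ∈ Finset.univ.filter (· ≠ i),
                  d' i j * s' j ^ α i j * s' i ^ β i j)) ∧
          dist s' s₀ < ε := by
  intro ε hε
  set c : Coeffs (Fin M) := ⟨a, b, d⟩
  have hE : AdmissibleExponents p α β := ⟨hα, hβ, hαβp, hsymm⟩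
  have hs₀' : 0 ≤ s₀ := fun i => (hs₀ i).le
  replace hcrit : IsCritical p α β c s₀ := hcrit
  have hc : IsCoupling c.d := ⟨hd, hdsymm⟩
  obtain ⟨δ₀, hδ₀, R, hR, hfar⟩ := exists_uniform_far_field hp hE ha hc hs₀ hcrit
  obtain ⟨m, hm, hmR, hmcrit, hmmax⟩ := exists_isCritical_isMaxOn hp hE ha hc hs₀'
    (hfar c (by simpa [coeffDist] using hδ₀.le)).2
  rw [eq_of_isCritical hp hE ha hd hs₀ hm hcrit hmcrit] at hmR hmmax
  obtain ⟨η, hη, hgap⟩ := isCompact_Icc.exists_pos_forall_dist_lt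
    (continuous_energy (by linarith) hE c).continuousOn ⟨hs₀', fun i => (hmR i).le⟩
    (fun y hy hne => energy_lt_of_isMaxOn hp hE ha hc hs₀ hcrit hmmax hy.1 hne) hε
  set B := 1 + Fintype.card (Fin M) * R ^ p
  have hB : 0 < B := by positivity
  refine ⟨min δ₀ (η / B), lt_min hδ₀ (div_pos hη hB), fun a' b' d' hd' hd'symm hsize => ?_⟩
  set c' : Coeffs (Fin M) := ⟨a', b', d'⟩
  replace hsize : coeffDist c' c < min δ₀ (η / B) := hsize
  obtain ⟨ha', hfar'⟩ := hfar c' (hsize.le.trans (min_le_left _ _))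
  obtain ⟨s', hs', hs'R, hcrit', hmax'⟩ :=
    exists_isCritical_isMaxOn hp hE ha' ⟨hd', hd'symm⟩ hs₀' hfar'
  refine ⟨s', hs', hcrit', fun t ht htcrit => eq_of_isCritical hp hE ha' hd' hs' ht hcrit' htcrit,
    fun t ht => hmax' fun i => (ht i).le,
    hgap _ (fun x hx => ?_) s' ⟨fun i => (hs' i).le, fun i => (hs'R i).le⟩ (hmax' hs₀')⟩
  exact (abs_energy_sub_le_of_mem_Icc hp.le hE c' c hx).trans_lt
    ((lt_div_iff₀ hB).1 (hsize.trans_le (min_le_right _ _)))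

/-- Stability lemma: if `J` has a critical point `s⁰` in `(0,∞)^M`, then every
sufficiently small perturbation `J̃` of the coefficients (keeping `d̃ ≥ 0`
symmetric) has a unique critical point `s̃⁰` in `(0,∞)^M`, which is a global
maximum and is `ε`-close to `s⁰`. -/
theorem stability_lemma
    {M : ℕ} (hM : 1 ≤ M) (p : ℝ) (hp : 2 < p)
    (a b : Fin M → ℝ) (d α β : Fin M → Fin M → ℝ)
    (ha : ∀ i, 0 < a i) (hb : ∀ i, 0 < b i)
    (hd : ∀ i j, i ≠ j → 0 ≤ d i j)
    (hdsymm : ∀ i j, i ≠ j → d i j = d j i)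
    (hα : ∀ i j, i ≠ j → 1 < α i j) (hβ : ∀ i j, i ≠ j → 1 < β i j)
    (hαβp : ∀ i j, i ≠ j → α i j + β i j = p)
    (hsymm : ∀ i j, i ≠ j → α j i = β i j)
    (s₀ : Fin M → ℝ) (hs₀ : ∀ i, 0 < s₀ i)
    -- `s⁰` is a critical point of `J` in `(0,∞)^M`
    (hcrit : ∀ i,
      2 * a i * s₀ i - p * b i * s₀ i ^ (p - 1)
        + 2 * ∑ j ∈ Finset.univ.filter (· ≠ i),
            d i j * β i j * s₀ j ^ α i j * s₀ i ^ (β i j - 1) = 0) :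
    ∀ ε > (0 : ℝ), ∃ δ > (0 : ℝ),
      ∀ (a' b' : Fin M → ℝ) (d' : Fin M → Fin M → ℝ),
        (∀ i j, i ≠ j → 0 ≤ d' i j) →
        (∀ i j, i ≠ j → d' i j = d' j i) →
        (∑ i, (|a' i - a i| + |b' i - b i|))
          + ∑ i, ∑ j ∈ Finset.univ.filter (· ≠ i), |d' i j - d i j| < δ →
        ∃ s' : Fin M → ℝ, (∀ i, 0 < s' i) ∧
          -- `s'` is a critical point of the perturbed function `J̃`
          (∀ i, 2 * a' i * s' i - p * b' i * s' i ^ (p - 1)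
            + 2 * ∑ j ∈ Finset.univ.filter (· ≠ i),
                d' i j * β i j * s' j ^ α i j * s' i ^ (β i j - 1) = 0) ∧
          -- uniqueness among critical points of `J̃` in `(0,∞)^M`
          (∀ t : Fin M → ℝ, (∀ i, 0 < t i) →
            (∀ i, 2 * a' i * t i - p * b' i * t i ^ (p - 1)
              + 2 * ∑ j ∈ Finset.univ.filter (· ≠ i),
                  d' i j * β i j * t j ^ α i j * t i ^ (β i j - 1) = 0) →
            t = s') ∧
          -- `s'` is a global maximum of `J̃` on `(0,∞)^M`
          (∀ t : Fin M → ℝ, (∀ i, 0 < t i) →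
            (∑ i, a' i * t i ^ (2 : ℝ) - ∑ i, b' i * t i ^ p
              + ∑ i, ∑ j ∈ Finset.univ.filter (· ≠ i),
                  d' i j * t j ^ α i j * t i ^ β i j) ≤
            (∑ i, a' i * s' i ^ (2 : ℝ) - ∑ i, b' i * s' i ^ p
              + ∑ i, ∑ j ∈ Finset.univ.filter (· ≠ i),
                  d' i j * s' j ^ α i j * s' i ^ β i j)) ∧
          dist s' s₀ < ε :=
  stability_lemma_general p hp a b d α β ha hd hdsymm hα hβ hαβp hsymm s₀ hs₀ hcrit
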